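/- Let d = 2k+1 ≥ 5 be an odd integer and let (2,γ,δ) ∈ W_d. There exist (1,γ₁,δ₁), (2,γ₂,δ₂) ∈ W_d with (γ₁,δ₁) ≠ (0,0), γ₁ + γ₂ = γ and δ₁ + δ₂ = δ if and only if it is not the case that γ ≤ k+1 and δ = max{0, d−2γ}. (The monomial w_{(1,0,0)}w_{(2,γ,δ)} admits a non-trivial suitable 2-binomial exactly outside these exceptions.) -/

import Mathlib

/-!
For `(2,γ,δ) ∈ W_d` the weight `δ + 2γ` is at least `d`. Splitting off a nonzero `(1,γ₁,δ₁)`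
lowers the weight by `δ₁ + 2γ₁ ≥ 1`, and by at least `2` when `δ₁ = 0`, which is forced when
`δ = 0`; conversely, whenever the weight allows it, `(1,0,1)` or `(1,1,0)` can be split off.
For `d = 2k+1` the excluded cases are weight `d`, i.e. `δ = d - 2γ` with `γ ≤ k`, and `δ = 0`
with weight `d + 1`, i.e. `γ = k+1`.
-/

/-- `W_d`: triples `(r,γ,δ)` encoding the degree-`d` monomials invariant under the
action of the diagonal matrix `M(1,e,e²,e³)`. -/
def Wset (d : ℕ) : Set (ℤ × ℤ × ℤ) :=
  {x | 0 ≤ x.1 ∧ x.1 ≤ 3 ∧ 0 ≤ x.2.1 ∧ 0 ≤ x.2.2 ∧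
    0 ≤ x.2.2 + 2 * x.2.1 + (1 - x.1) * (d : ℤ) ∧ 2 * x.2.2 + 3 * x.2.1 ≤ x.1 * (d : ℤ)}

namespace Wset

variable {d : ℕ} {γ δ : ℤ}

@[simp]
theorem one_mem_iff : ((1 : ℤ), γ, δ) ∈ Wset d ↔ 0 ≤ γ ∧ 0 ≤ δ ∧ 2 * δ + 3 * γ ≤ d := by
  simp only [Wset, Set.mem_ofPred_eq]
  omega

@[simp]
theorem two_mem_iff : ((2 : ℤ), γ, δ) ∈ Wset d ↔
    0 ≤ γ ∧ 0 ≤ δ ∧ (d : ℤ) ≤ δ + 2 * γ ∧ 2 * δ + 3 * γ ≤ 2 * d := by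
  simp only [Wset, Set.mem_ofPred_eq]
  omega

/-- `w_{(1,0,0)} w_{(2,γ,δ)} - w_{(1,γ₁,δ₁)} w_{(2,γ₂,δ₂)}` is a non-trivial suitable
2-binomial. -/
def HasNontrivialSplit (d : ℕ) (γ δ : ℤ) : Prop :=
  ∃ γ₁ δ₁ γ₂ δ₂ : ℤ, ((1:ℤ), γ₁, δ₁) ∈ Wset d ∧ ((2:ℤ), γ₂, δ₂) ∈ Wset d ∧
    (γ₁, δ₁) ≠ ((0:ℤ), (0:ℤ)) ∧ γ₁ + γ₂ = γ ∧ δ₁ + δ₂ = δ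

theorem HasNontrivialSplit.weight_bound (h : HasNontrivialSplit d γ δ) :
    (d : ℤ) < δ + 2 * γ ∧ (δ = 0 → (d : ℤ) + 2 ≤ 2 * γ) := by
  obtain ⟨γ₁, δ₁, γ₂, δ₂, h₁, h₂, hne, rfl, rfl⟩ := h
  rw [one_mem_iff] at h₁
  rw [two_mem_iff] at h₂
  rw [ne_eq, Prod.mk.injEq, not_and_or] at hne
  omega

theorem hasNontrivialSplit_of_weight_bound (hmem : ((2 : ℤ), γ, δ) ∈ Wset d)
    (hlt : (d : ℤ) < δ + 2 * γ) (hzero : δ = 0 → (d : ℤ) + 2 ≤ 2 * γ) :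
    HasNontrivialSplit d γ δ := by
  rw [two_mem_iff] at hmem
  rcases eq_or_ne δ 0 with rfl | hδ
  · refine ⟨1, 0, γ - 1, 0, ?_, ?_, by simp, by ring, by ring⟩ <;> simp <;> omega
  · refine ⟨0, 1, γ, δ - 1, ?_, ?_, by simp, by ring, by ring⟩ <;> simp <;> omega

theorem hasNontrivialSplit_iff (hmem : ((2 : ℤ), γ, δ) ∈ Wset d) :
    HasNontrivialSplit d γ δ ↔ (d : ℤ) < δ + 2 * γ ∧ (δ = 0 → (d : ℤ) + 2 ≤ 2 * γ) :=
  ⟨HasNontrivialSplit.weight_bound, fun ⟨hlt, hzero⟩ =>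
    hasNontrivialSplit_of_weight_bound hmem hlt hzero⟩

end Wset

theorem stmt14 (d k : ℕ) (hdk : d = 2 * k + 1) (γ δ : ℤ) (hmem : ((2:ℤ), γ, δ) ∈ Wset d) :
    (∃ γ₁ δ₁ γ₂ δ₂ : ℤ, ((1:ℤ), γ₁, δ₁) ∈ Wset d ∧ ((2:ℤ), γ₂, δ₂) ∈ Wset d ∧
        (γ₁, δ₁) ≠ ((0:ℤ), (0:ℤ)) ∧ γ₁ + γ₂ = γ ∧ δ₁ + δ₂ = δ) ↔
      ¬ (γ ≤ (k:ℤ) + 1 ∧ δ = max 0 ((d:ℤ) - 2 * γ)) := by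
  change Wset.HasNontrivialSplit d γ δ ↔ _
  rw [Wset.hasNontrivialSplit_iff hmem]
  rw [Wset.two_mem_iff] at hmem
  omega
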